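/- arXiv:2503.22536 — 2 statements merged into one kernel-verified Lean document; each statement's English description precedes it below -/
import Mathlib

section
/- For every real number k ≥ 2, the areal Mahler measure and the Mahler measure of x + y + k both equal log k: m_D(x+y+k) = m(x+y+k) = log k. -/
/-!
Since `log ‖z + a‖` is harmonic away from `-a`, its mean over the circle of radius `r ≤ ‖a‖` about
the origin is `log ‖a‖`; integrating these circle means in polar coordinates gives
the same value for the mean over the disk. Since `k ≥ 2`, the point `x + k` lies outside the unit
disk whenever `‖x‖ ≤ 1` (strictly outside when `‖x‖ < 1`, which holds for almost every `x` in the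
disk), so in both double integrals the inner integral collapses to `log ‖x + k‖`, and a second
application gives `log k`.
-/

open MeasureTheory Real

/-- The closed unit disk in the complex plane. -/
def unitDisk : Set ℂ := {z : ℂ | ‖z‖ ≤ 1}

/-- The areal (logarithmic) Mahler measure of `x + y + k`. -/
noncomputable def arealMahlerXYK (k : ℝ) : ℝ :=
  (1 / π ^ 2) *
    ∫ x in unitDisk, ∫ y in unitDisk, Real.log ‖x + y + (k : ℂ)‖

/-- The (logarithmic) Mahler measure of `x + y + k`. -/
noncomputable def mahlerXYK (k : ℝ) : ℝ :=
  (1 / (2 * π) ^ 2) *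
    ∫ θ₁ in (0 : ℝ)..(2 * π), ∫ θ₂ in (0 : ℝ)..(2 * π),
      Real.log ‖Complex.exp (θ₁ * Complex.I) +
        Complex.exp (θ₂ * Complex.I) + (k : ℂ)‖

open Metric Set

section CircleAverage

variable {E : Type*} [NormedAddCommGroup E] [NormedSpace ℝ E]

theorem integral_Ioo_neg_pi_pi_eq_smul_circleAverage (f : ℂ → E) (r : ℝ) :
    ∫ θ in Ioo (-π) π, f (circleMap 0 r θ) = (2 * π) • circleAverage f 0 r := by
  have hper : Function.Periodic (fun θ ↦ f (circleMap 0 r θ)) (2 * π) :=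
    fun θ ↦ by simp [periodic_circleMap 0 r θ]
  have := hper.intervalIntegral_add_eq (-π) 0
  rw [show -π + 2 * π = π by ring, zero_add] at this
  rw [circleAverage_def, smul_inv_smul₀ (by positivity), ← this,
    intervalIntegral.integral_of_le (by linarith [pi_pos]), integral_Ioc_eq_integral_Ioo]

theorem integrableOn_smul_comp_circleMap {f : ℂ → E} {R : ℝ}
    (hf : ContinuousOn f (closedBall 0 R)) :
    IntegrableOn (fun p : ℝ × ℝ ↦ p.1 • f (circleMap 0 p.1 p.2)) (Ioc 0 R ×ˢ Ioo (-π) π) := by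
  have hmaps : MapsTo (fun p : ℝ × ℝ ↦ circleMap 0 p.1 p.2) (Icc 0 R ×ˢ Icc (-π) π)
      (closedBall 0 R) := by
    rintro p ⟨⟨hp₀, hpR⟩, -⟩
    simpa [abs_of_nonneg hp₀] using hpR
  have hcont : ContinuousOn (fun p : ℝ × ℝ ↦ p.1 • f (circleMap 0 p.1 p.2))
      (Icc 0 R ×ˢ Icc (-π) π) :=
    continuousOn_fst.smul (hf.comp (by unfold circleMap; fun_prop) hmaps)
  exact (hcont.integrableOn_compact (isCompact_Icc.prod isCompact_Icc)).mono_set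
    (prod_mono Ioc_subset_Icc_self Ioo_subset_Icc_self)

theorem integral_closedBall_eq_integral_circleAverage [CompleteSpace E] {f : ℂ → E} {R : ℝ}
    (hR : 0 ≤ R) (hf : ContinuousOn f (closedBall 0 R)) :
    ∫ z in closedBall (0 : ℂ) R, f z = ∫ r in 0..R, (2 * π * r) • circleAverage f 0 r := by
  have htarget : polarCoord.target ∩ {p | p.1 ≤ R} = Ioc 0 R ×ˢ Ioo (-π) π := by
    ext ⟨r, θ⟩
    simp [polarCoord_target, and_right_comm]
  calc ∫ z in closedBall (0 : ℂ) R, f z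
      = ∫ p in polarCoord.target,
          p.1 • (closedBall 0 R).indicator f (Complex.polarCoord.symm p) := by
        rw [Complex.integral_comp_polarCoord_symm, integral_indicator measurableSet_closedBall]
    _ = ∫ p in polarCoord.target,
          {p : ℝ × ℝ | p.1 ≤ R}.indicator (fun p ↦ p.1 • f (circleMap 0 p.1 p.2)) p := by
        refine setIntegral_congr_fun polarCoord.open_target.measurableSet fun p hp ↦ ?_
        have hp₀ : 0 < p.1 := hp.1
        by_cases hpR : p.1 ≤ R <;>
          simp [indicator, hpR, abs_of_pos hp₀, circleMap_zero, Complex.exp_mul_I]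
    _ = ∫ r in Ioc 0 R, ∫ θ in Ioo (-π) π, r • f (circleMap 0 r θ) := by
        rw [setIntegral_indicator (measurableSet_le measurable_fst measurable_const), htarget,
          Measure.volume_eq_prod, setIntegral_prod _
          (by simpa [Measure.volume_eq_prod] using integrableOn_smul_comp_circleMap hf)]
    _ = ∫ r in 0..R, (2 * π * r) • circleAverage f 0 r := by
        rw [intervalIntegral.integral_of_le hR]
        refine setIntegral_congr_fun measurableSet_Ioc fun r _ ↦ ?_
        rw [integral_smul, integral_Ioo_neg_pi_pi_eq_smul_circleAverage, smul_smul, mul_comm r]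

theorem integral_exp_mul_I_eq_smul_circleAverage (f : ℂ → E) :
    ∫ θ in 0..2 * π, f (Complex.exp (θ * Complex.I)) = (2 * π) • circleAverage f 0 1 := by
  rw [circleAverage_def, smul_inv_smul₀ two_pi_pos.ne']
  simp [circleMap_zero]

end CircleAverage

theorem circleAverage_log_norm_add_const_of_abs_le {a : ℂ} {r : ℝ} (h : |r| ≤ ‖a‖) :
    circleAverage (log ‖· + a‖) 0 r = log ‖a‖ := by
  rw [← circleAverage_abs_radius]
  rcases (abs_nonneg r).eq_or_lt with hr | hr
  · simp [← hr]
  have hsub : (log ‖· + a‖) = (log ‖· - -a‖) := by simp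
  have hquot : 1 ≤ |r|⁻¹ * ‖a‖ := (one_le_inv_mul₀ hr).2 h
  rw [hsub, circleAverage_log_norm_sub_const_eq_log_radius_add_posLog hr.ne', zero_sub, neg_neg,
    posLog_eq_log (by rwa [abs_of_nonneg (by positivity)]),
    log_mul (inv_ne_zero hr.ne') (by linarith), log_inv, add_neg_cancel_left]

theorem integral_closedBall_log_norm_add_const {a : ℂ} {R : ℝ} (hR : 0 ≤ R) (h : R < ‖a‖) :
    ∫ z in closedBall (0 : ℂ) R, log ‖z + a‖ = π * R ^ 2 * log ‖a‖ := by
  have hcont : ContinuousOn (log ‖· + a‖) (closedBall 0 R) := by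
    refine ContinuousOn.log (by fun_prop) fun z hz ↦ norm_ne_zero_iff.2 fun hza ↦ ?_
    rw [add_eq_zero_iff_eq_neg.1 hza, mem_closedBall_zero_iff, norm_neg] at hz
    linarith
  rw [integral_closedBall_eq_integral_circleAverage hR hcont]
  calc ∫ r in 0..R, (2 * π * r) • circleAverage (log ‖· + a‖) 0 r
      = ∫ r in 0..R, 2 * π * log ‖a‖ * r := by
        refine intervalIntegral.integral_congr fun r hr ↦ ?_
        rw [uIcc_of_le hR] at hr
        rw [circleAverage_log_norm_add_const_of_abs_le
          (by rw [abs_of_nonneg hr.1]; linarith [hr.2]), smul_eq_mul]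
        ring
    _ = π * R ^ 2 * log ‖a‖ := by
        rw [intervalIntegral.integral_const_mul, integral_id]
        ring

theorem sub_norm_le_norm_add_ofReal (z : ℂ) {k : ℝ} (hk : 0 ≤ k) : k - ‖z‖ ≤ ‖z + k‖ := by
  simpa [abs_of_nonneg hk, add_comm] using norm_sub_norm_le (k : ℂ) (-z)

theorem unitDisk_eq_closedBall : unitDisk = closedBall 0 1 := by
  ext z
  simp [unitDisk]

theorem mahlerXYK_eq_log {k : ℝ} (hk : 2 ≤ k) : mahlerXYK k = log k := by
  have hnorm : ‖(k : ℂ)‖ = k := by rw [Complex.norm_real, norm_of_nonneg (by linarith)]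
  have hinner (θ₁ : ℝ) : ∫ θ₂ in 0..2 * π, log ‖Complex.exp (θ₁ * Complex.I) +
      Complex.exp (θ₂ * Complex.I) + k‖ = 2 * π * log ‖Complex.exp (θ₁ * Complex.I) + k‖ := by
    have hrearrange (θ₂ : ℝ) : Complex.exp (θ₁ * Complex.I) + Complex.exp (θ₂ * Complex.I) + k =
        Complex.exp (θ₂ * Complex.I) + (Complex.exp (θ₁ * Complex.I) + k) := by ring
    simp_rw [hrearrange]
    have hbound : 1 ≤ ‖Complex.exp (θ₁ * Complex.I) + k‖ := by
      have := sub_norm_le_norm_add_ofReal (Complex.exp (θ₁ * Complex.I)) (by linarith : 0 ≤ k)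
      rw [Complex.norm_exp_ofReal_mul_I] at this
      linarith
    rw [integral_exp_mul_I_eq_smul_circleAverage (log ‖· + (Complex.exp (θ₁ * Complex.I) + k)‖),
      circleAverage_log_norm_add_const_of_abs_le (by rwa [abs_one]), smul_eq_mul]
  rw [mahlerXYK, intervalIntegral.integral_congr fun θ₁ _ ↦ hinner θ₁,
    intervalIntegral.integral_const_mul,
    integral_exp_mul_I_eq_smul_circleAverage (log ‖· + k‖),
    circleAverage_log_norm_add_const_of_abs_le (by rw [hnorm, abs_one]; linarith), smul_eq_mul,
    hnorm]
  field_simp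

theorem arealMahlerXYK_eq_log {k : ℝ} (hk : 2 ≤ k) : arealMahlerXYK k = log k := by
  have hnorm : ‖(k : ℂ)‖ = k := by rw [Complex.norm_real, norm_of_nonneg (by linarith)]
  have hsphere : ∀ᵐ x : ℂ, x ∉ sphere 0 1 :=
    measure_eq_zero_iff_ae_notMem.1 (Measure.addHaar_sphere volume 0 1)
  have hinner : ∀ᵐ x : ℂ, x ∈ closedBall 0 1 →
      ∫ y in closedBall 0 1, log ‖x + y + k‖ = π * log ‖x + k‖ := by
    filter_upwards [hsphere] with x hx hxD
    have hx1 : ‖x‖ < 1 := lt_of_le_of_ne (by simpa using hxD) (by simpa using hx)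
    have hrearrange (y : ℂ) : x + y + k = y + (x + k) := by ring
    simp_rw [hrearrange]
    have hbound : 1 < ‖x + k‖ := by
      linarith [sub_norm_le_norm_add_ofReal x (by linarith : 0 ≤ k)]
    rw [integral_closedBall_log_norm_add_const zero_le_one hbound]
    ring
  rw [arealMahlerXYK, unitDisk_eq_closedBall,
    setIntegral_congr_ae measurableSet_closedBall hinner, integral_const_mul,
    integral_closedBall_log_norm_add_const zero_le_one (by rw [hnorm]; linarith), hnorm]
  field_simp

theorem arealMahler_xyk_eq_log (k : ℝ) (hk : 2 ≤ k) :
    arealMahlerXYK k = mahlerXYK k ∧ mahlerXYK k = Real.log k :=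
  ⟨(arealMahlerXYK_eq_log hk).trans (mahlerXYK_eq_log hk).symm, mahlerXYK_eq_log hk⟩
end

section
/- For every complex number τ with Im(τ) > 0, the family indexed by pairs of odd integers (m, n) with terms e^{−πim/2} / ( (mτ + n)² · m ) is absolutely summable; that is, Σ_{m,n odd} | e^{−πim/2} / ((mτ + n)² m) | < ∞. -/
/-!
Since `‖exp (-π i m / 2)‖ = 1`, the terms are `1 / (|mτ + n|² |m|)`. The Eisenstein series estimate
`|mτ + n| ≥ r(τ) max(|m|, |n|)` together with `max(a, b)² a ≥ a^{3/2} b^{3/2}` bounds them by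
`r(τ)⁻² |m|^{-3/2} |n|^{-3/2}`, a product of two summable series over `ℤ`.
-/

open Real UpperHalfPlane EisensteinSeries

lemma norm_exp_neg_pi_mul_I_mul_ofReal_div_two (x : ℝ) :
    ‖Complex.exp (-(π * Complex.I * x) / 2)‖ = 1 := by
  simp [Complex.norm_exp]

lemma rpow_three_halves_mul_rpow_three_halves_le {a b : ℝ} (ha : 0 ≤ a) (hb : 0 ≤ b) :
    a ^ (3 / 2 : ℝ) * b ^ (3 / 2 : ℝ) ≤ max a b ^ 2 * a := by
  set M := max a b
  have hM : 0 ≤ M := ha.trans (le_max_left a b)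
  calc a ^ (3 / 2 : ℝ) * b ^ (3 / 2 : ℝ) = a * a ^ (1 / 2 : ℝ) * b ^ (3 / 2 : ℝ) := by
        rw [← rpow_one_add' ha (by norm_num)]; norm_num
    _ ≤ a * M ^ (1 / 2 : ℝ) * M ^ (3 / 2 : ℝ) := by
        gcongr
        · exact le_max_left a b
        · exact le_max_right a b
    _ = M ^ 2 * a := by
        rw [mul_assoc, ← rpow_add' hM (by norm_num)]; norm_num; ring

lemma r_mul_max_abs_le (z : ℍ) {m : ℤ} (hm : m ≠ 0) (n : ℤ) :
    r z * max |(m : ℝ)| |(n : ℝ)| ≤ ‖(m : ℂ) * z + n‖ := by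
  have hx : ![m, n] ≠ 0 := fun h ↦ hm (by simpa using congrFun h 0)
  simpa [norm_eq_max_natAbs, Nat.cast_natAbs] using r_mul_max_le z hx

lemma norm_one_div_sq_mul_le (z : ℍ) {m n : ℤ} (hm : m ≠ 0) (hn : n ≠ 0) :
    ‖1 / (((m : ℂ) * z + n) ^ 2 * m)‖ ≤
      (r z ^ 2)⁻¹ * (|(m : ℝ)| ^ (-(3 / 2) : ℝ) * |(n : ℝ)| ^ (-(3 / 2) : ℝ)) := by
  have hr := r_pos z
  have hm' : 0 < |(m : ℝ)| := by positivity
  have hn' : 0 < |(n : ℝ)| := by positivity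
  have hden : r z ^ 2 * (|(m : ℝ)| ^ (3 / 2 : ℝ) * |(n : ℝ)| ^ (3 / 2 : ℝ)) ≤
      ‖(m : ℂ) * z + n‖ ^ 2 * |(m : ℝ)| :=
    calc r z ^ 2 * (|(m : ℝ)| ^ (3 / 2 : ℝ) * |(n : ℝ)| ^ (3 / 2 : ℝ))
        ≤ r z ^ 2 * (max |(m : ℝ)| |(n : ℝ)| ^ 2 * |(m : ℝ)|) := by
          gcongr _ * ?_; exact rpow_three_halves_mul_rpow_three_halves_le hm'.le hn'.le
      _ = (r z * max |(m : ℝ)| |(n : ℝ)|) ^ 2 * |(m : ℝ)| := by ring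
      _ ≤ ‖(m : ℂ) * z + n‖ ^ 2 * |(m : ℝ)| := by gcongr; exact r_mul_max_abs_le z hm n
  rw [rpow_neg hm'.le, rpow_neg hn'.le, ← mul_inv, ← mul_inv, ← one_div, norm_div, norm_one,
    norm_mul, norm_pow, Complex.norm_intCast]
  exact one_div_le_one_div_of_le (by positivity) hden

lemma summable_abs_int_rpow_neg_three_halves_mul :
    Summable fun q : ℤ × ℤ ↦ |(q.1 : ℝ)| ^ (-(3 / 2) : ℝ) * |(q.2 : ℝ)| ^ (-(3 / 2) : ℝ) := by
  have h := summable_abs_int_rpow (b := 3 / 2) (by norm_num)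
  exact h.mul_of_nonneg h (fun _ ↦ by positivity) (fun _ ↦ by positivity)

theorem summable_odd_lattice_sum (τ : ℂ) (hτ : 0 < τ.im) :
    Summable (fun p : {q : ℤ × ℤ // Odd q.1 ∧ Odd q.2} =>
      ‖Complex.exp (-(π * Complex.I * (p.1.1 : ℂ)) / 2) /
        (((p.1.1 : ℂ) * τ + (p.1.2 : ℂ)) ^ 2 * (p.1.1 : ℂ))‖) := by
  let z : ℍ := ⟨τ, hτ⟩
  refine Summable.of_nonneg_of_le (fun _ ↦ norm_nonneg _) ?_
    ((summable_abs_int_rpow_neg_three_halves_mul.comp_injective Subtype.val_injective).mul_left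
      (r z ^ 2)⁻¹)
  rintro ⟨⟨m, n⟩, hm, hn⟩
  have hexp := norm_exp_neg_pi_mul_I_mul_ofReal_div_two m
  push_cast at hexp
  rw [div_eq_mul_one_div, norm_mul, hexp, one_mul]
  exact norm_one_div_sq_mul_le z (by rintro rfl; simp at hm) (by rintro rfl; simp at hn)
end
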